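/- Suppose the rooted tree T has depth at most D. For each ordered light pair ⟨x,y⟩, fix a witness component C = C^{⟨x,y⟩} ∈ FS(x,y) with the tree edge (y,y_h) not on π_x(s,C), and define the channel path Π_{⟨x,y⟩} := π(x, v_C) followed by the edge (v_C, u_C) followed by π(u_C, y). Then (i) each channel Π_{⟨x,y⟩} has at most 2D+1 edges, and (ii) every vertex of G is an internal vertex (a vertex other than the endpoints x, y) of at most (D+1)·(log₂(n)+1) + log₂(n)·(D+2) of the channels {Π_{⟨x,y⟩} : ⟨x,y⟩ an ordered light pair}. (Indeed, an internal vertex a on the segment π(x,v_C) has x as a proper ancestor and satisfies y ∈ LA(u_{C_{x,a}}) ∪ {u_{C_{x,a}}}, while an internal vertex a on the segment π(u_C,y) satisfies y ∈ LA(a) and x ∈ π_y(s, C_{y,a}).) -/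

import Mathlib

/-- A rooted spanning tree of the graph `G`, given by a root and a parent function:
the root is a fixed point of `parent`, every vertex reaches the root by iterating
`parent`, and every (parent, child) pair is an edge of `G`. -/
structure RSTree {V : Type*} (G : SimpleGraph V) where
  root : V
  parent : V → V
  parent_root : parent root = root
  reaches : ∀ v : V, ∃ n : ℕ, parent^[n] v = root
  adj : ∀ v : V, v ≠ root → G.Adj (parent v) v

namespace RSTree

variable {V : Type*} {G : SimpleGraph V}

/-- `u` is an ancestor of `v` in `T`, i.e. `u` lies on the tree path `π(root, v)`;
includes `u = v`. -/
def Anc (T : RSTree G) (u v : V) : Prop := ∃ n : ℕ, T.parent^[n] v = u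

/-- The vertex set `V(T_x)` of the subtree of `T` rooted at `x`. -/
def sub (T : RSTree G) (x : V) : Set V := {v | T.Anc x v}

/-- `c` is a child of `v` in `T`. -/
def IsChild (T : RSTree G) (c v : V) : Prop := T.parent c = v ∧ c ≠ v

/-- `V_x = V(T_x) \ {x}`. -/
def Vx (T : RSTree G) (x : V) : Set V := {v | T.Anc x v ∧ v ≠ x}

end RSTree

/-- `v` and `w` are connected by a walk of `G` all of whose vertices lie in `S`
(i.e. they lie in the same connected component of the induced subgraph `G[S]`). -/
def ReachableWithin {V : Type*} (G : SimpleGraph V) (S : Set V) (v w : V) : Prop :=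
  ∃ p : G.Walk v w, ∀ u ∈ p.support, u ∈ S

/-- `C` is (the vertex set of) a connected component of the induced subgraph `G[S]`. -/
def IsCompOf {V : Type*} (G : SimpleGraph V) (S : Set V) (C : Set V) : Prop :=
  ∃ v ∈ S, C = {w | ReachableWithin G S v w}

/-- The connected component of `v` in the induced subgraph `G[S]` (as a vertex set). -/
def CompOfVert {V : Type*} (G : SimpleGraph V) (S : Set V) (v : V) : Set V :=
  {w | ReachableWithin G S v w}

/-- The vertex set of the path `π_x(s,C) = π(s, u_C) ∘ (u_C, v_C)` associated to a
component `C` (given the choice functions `uc, vc` of the edge `(u_C, v_C)`): it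
consists of all ancestors of `u_C` together with `v_C`. -/
def CompPath {V : Type*} {G : SimpleGraph V} (T : RSTree G)
    (uc vc : Set V → V) (C : Set V) : Set V :=
  {w | T.Anc w (uc C)} ∪ {vc C}

/-- `C ∈ 𝒞_x` is pseudo-`y`-sensitive: the path `π_x(s,C)` contains a tree edge
`(y, y')` from `y` to a child `y'` of `y` such that `x` does not lie on
`π_y(s, C_{y,y'})`. Here `ucx, vcx` are the edge choices for components of `G[V_x]`
and `ucy, vcy` those for components of `G[V_y]`. -/
def PseudoSens {V : Type*} {G : SimpleGraph V} (T : RSTree G)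
    (ucx vcx ucy vcy : Set V → V) (x y : V) (C : Set V) : Prop :=
  ∃ y', T.IsChild y' y ∧ T.Anc y' (ucx C) ∧
    x ∉ CompPath T ucy vcy (CompOfVert G (T.Vx y) y')

/-- `C ∈ 𝒞_x` is fully-`y`-sensitive: `y` lies on `π_x(s,C)` (i.e. `C` is
`y`-sensitive) and `C` is not pseudo-`y`-sensitive. -/
def FullySens {V : Type*} {G : SimpleGraph V} (T : RSTree G)
    (ucx vcx ucy vcy : Set V → V) (x y : V) (C : Set V) : Prop :=
  y ∈ CompPath T ucx vcx C ∧ ¬ PseudoSens T ucx vcx ucy vcy x y C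

/-- `hch` is a valid designation of heavy children: for every non-leaf vertex `v`,
`hch v` is a child of `v` whose subtree has the maximum number of vertices among all
children of `v`. -/
def HchValid {V : Type*} {G : SimpleGraph V} (T : RSTree G) (hch : V → V) : Prop :=
  ∀ v : V, (∃ c, T.IsChild c v) →
    T.IsChild (hch v) v ∧ ∀ c, T.IsChild c v → (T.sub c).ncard ≤ (T.sub (hch v)).ncard

/-- The family `uc, vc` of edge choices is valid: for every `x ≠ s` with `G \ {x}`
connected and every connected component `C` of `G[V_x]`, `(uc x C, vc x C)` is an edge
of `G` with `vc x C ∈ C` and `uc x C ∉ V(T_x)`. -/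
def GoodChoice {V : Type*} (G : SimpleGraph V) (T : RSTree G)
    (uc vc : V → Set V → V) : Prop :=
  ∀ x : V, x ≠ T.root → (G.induce (({x} : Set V)ᶜ)).Connected →
    ∀ C, IsCompOf G (T.Vx x) C →
      G.Adj (uc x C) (vc x C) ∧ vc x C ∈ C ∧ uc x C ∉ T.sub x

/-- `x, y` is a heavy pair: an independent pair, both non-leaves of `T`, both `≠ s`,
with `G \ {x}` and `G \ {y}` connected, such that every fully-`y`-sensitive component
`C ∈ FS(x,y)` has the tree edge `(y, y_h)` on `π_x(s,C)` and every fully-`x`-sensitive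
component `C ∈ FS(y,x)` has the tree edge `(x, x_h)` on `π_y(s,C)`. -/
def HeavyPair {V : Type*} {G : SimpleGraph V} (T : RSTree G) (hch : V → V)
    (uc vc : V → Set V → V) (x y : V) : Prop :=
  x ≠ T.root ∧ y ≠ T.root ∧ ¬ T.Anc x y ∧ ¬ T.Anc y x ∧
  T.IsChild (hch x) x ∧ T.IsChild (hch y) y ∧
  (G.induce (({x} : Set V)ᶜ)).Connected ∧ (G.induce (({y} : Set V)ᶜ)).Connected ∧
  (∀ C, IsCompOf G (T.Vx x) C → FullySens T (uc x) (vc x) (uc y) (vc y) x y C →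
    T.Anc (hch y) (uc x C)) ∧
  (∀ C, IsCompOf G (T.Vx y) C → FullySens T (uc y) (vc y) (uc x) (vc x) y x C →
    T.Anc (hch x) (uc y C))

/-- `u` is a light ancestor of `v`: `u` lies on the root-to-`v` path, `u ≠ v`, and the
edge of this path leaving `u` towards `v` goes to a child `c` of `u` with
`c ≠ hch u`. -/
def LightAnc {V : Type*} {G : SimpleGraph V} (T : RSTree G) (hch : V → V)
    (u v : V) : Prop :=
  ∃ c : V, T.parent c = u ∧ c ≠ u ∧ T.Anc c v ∧ c ≠ hch u

/-- `⟨x,y⟩` is an ordered light pair: an independent pair, both `≠ s`, both non-leaves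
of `T`, with `G \ {x}` and `G \ {y}` connected, such that there exists a
fully-`y`-sensitive component `C ∈ FS(x,y)` for which the tree edge `(y, y_h)` does
not lie on `π_x(s,C)`. -/
def OrderedLightPair {V : Type*} {G : SimpleGraph V} (T : RSTree G) (hch : V → V)
    (uc vc : V → Set V → V) (x y : V) : Prop :=
  x ≠ T.root ∧ y ≠ T.root ∧ ¬ T.Anc x y ∧ ¬ T.Anc y x ∧
  T.IsChild (hch x) x ∧ T.IsChild (hch y) y ∧
  (G.induce (({x} : Set V)ᶜ)).Connected ∧ (G.induce (({y} : Set V)ᶜ)).Connected ∧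
  ∃ C, IsCompOf G (T.Vx x) C ∧ FullySens T (uc x) (vc x) (uc y) (vc y) x y C ∧
    ¬ T.Anc (hch y) (uc x C)

/-- The vertex set of the channel `Π_{⟨x,y⟩} = π(x, v_C) ∘ (v_C, u_C) ∘ π(u_C, y)`
associated to an ordered light pair `⟨x,y⟩` with chosen witness component
`C = Cw x y`: the vertices of the tree path from `x` down to `v_C` together with the
vertices of the tree path from `y` down to `u_C`. -/
def Channel {V : Type*} {G : SimpleGraph V} (T : RSTree G)
    (uc vc : V → Set V → V) (Cw : V → V → Set V) (x y : V) : Set V :=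
  {w | T.Anc x w ∧ T.Anc w (vc x (Cw x y))} ∪
  {w | T.Anc y w ∧ T.Anc w (uc x (Cw x y))}

/-!
Part (i): both tree segments of a channel lie on root paths, which have at most `D + 1`
vertices. Part (ii): if `a` is an internal vertex of `Π_{⟨x,y⟩}` on the segment
`π(x, v_C)`, then `C = C_{x,a}`, `x` is a proper ancestor of `a` (at most `D + 1`
choices), and `y` is `u_{C_{x,a}}` or one of its light ancestors (at most `log₂ n + 1`
choices given `x`). If `a` lies on `π(u_C, y)`, then `y` is a light ancestor of `a` (at
most `log₂ n` choices) and, as `C` is not pseudo-`y`-sensitive, `x` lies on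
`π_y(s, C_{y,a})` (at most `D + 2` choices given `y`). A vertex has at most `log₂ n`
light ancestors because each light edge at least halves the subtree size.
-/

namespace RSTree

variable {V : Type*} {G : SimpleGraph V} (T : RSTree G)

lemma anc_refl (v : V) : T.Anc v v := ⟨0, rfl⟩

lemma anc_parent (v : V) : T.Anc (T.parent v) v := ⟨1, rfl⟩

lemma anc_trans {u v w : V} (huv : T.Anc u v) (hvw : T.Anc v w) : T.Anc u w := by
  obtain ⟨n, rfl⟩ := huv
  obtain ⟨m, rfl⟩ := hvw
  exact ⟨n + m, Function.iterate_add_apply _ _ _ _⟩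

lemma iterate_parent_root (n : ℕ) : T.parent^[n] T.root = T.root :=
  Function.iterate_fixed T.parent_root n

lemma eq_root_of_anc_root {u : V} (h : T.Anc u T.root) : u = T.root := by
  obtain ⟨n, rfl⟩ := h
  exact T.iterate_parent_root n

lemma eq_root_of_isPeriodicPt {v : V} {k : ℕ} (hk : k ≠ 0)
    (hv : Function.IsPeriodicPt T.parent k v) : v = T.root := by
  obtain ⟨N, hN⟩ := T.reaches v
  have hkN : k * N = (k * N - N) + N := by
    have := Nat.le_mul_of_pos_left N (Nat.pos_of_ne_zero hk)
    omega
  rw [← (hv.mul_const N).eq, hkN, Function.iterate_add_apply, hN, iterate_parent_root]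

lemma parent_ne_self {v : V} (hv : v ≠ T.root) : T.parent v ≠ v :=
  fun h => hv (T.eq_root_of_isPeriodicPt one_ne_zero h)

lemma anc_antisymm {u v : V} (huv : T.Anc u v) (hvu : T.Anc v u) : u = v := by
  obtain ⟨n, rfl⟩ := huv
  obtain ⟨m, hm⟩ := hvu
  rcases Nat.eq_zero_or_pos (m + n) with h0 | hpos
  · rw [Nat.eq_zero_of_add_eq_zero_left h0]
    rfl
  · have hv : Function.IsPeriodicPt T.parent (m + n) v := by
      rw [Function.IsPeriodicPt, Function.IsFixedPt, Function.iterate_add_apply, hm]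
    rw [T.eq_root_of_isPeriodicPt hpos.ne' hv, iterate_parent_root]

lemma anc_total {u v w : V} (huw : T.Anc u w) (hvw : T.Anc v w) : T.Anc u v ∨ T.Anc v u := by
  obtain ⟨n, rfl⟩ := huw
  obtain ⟨m, rfl⟩ := hvw
  rcases le_total n m with h | h
  · exact Or.inr ⟨m - n, by rw [← Function.iterate_add_apply, Nat.sub_add_cancel h]⟩
  · exact Or.inl ⟨n - m, by rw [← Function.iterate_add_apply, Nat.sub_add_cancel h]⟩

lemma anc_parent_of_anc_of_ne {w c : V} (h : T.Anc w c) (hne : w ≠ c) :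
    T.Anc w (T.parent c) := by
  obtain ⟨_ | k, hk⟩ := h
  · exact absurd hk.symm hne
  · exact ⟨k, by rwa [Function.iterate_succ_apply] at hk⟩

lemma exists_child_anc_of_anc {u v : V} (h : T.Anc u v) (hne : u ≠ v) :
    ∃ c, T.IsChild c u ∧ T.Anc c v := by
  obtain ⟨n, hn⟩ := h
  induction n generalizing v with
  | zero => exact absurd hn.symm hne
  | succ n ih =>
    rw [Function.iterate_succ_apply] at hn
    by_cases hp : T.parent v = u
    · exact ⟨v, ⟨hp, hne.symm⟩, T.anc_refl v⟩
    · obtain ⟨c, hc, hcp⟩ := ih (Ne.symm hp) hn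
      exact ⟨c, hc, T.anc_trans hcp (T.anc_parent v)⟩

lemma IsChild.anc {c u : V} (hc : T.IsChild c u) : T.Anc u c := hc.1 ▸ T.anc_parent c

lemma IsChild.eq_of_anc {a b u : V} (ha : T.IsChild a u) (hb : T.IsChild b u)
    (hab : T.Anc a b) : a = b := by
  by_contra hne
  have hau : T.Anc a u := hb.1 ▸ T.anc_parent_of_anc_of_ne hab hne
  exact ha.2 (T.anc_antisymm hau (ha.anc T))

lemma IsChild.disjoint_sub {c c' u : V} (hc : T.IsChild c u) (hc' : T.IsChild c' u)
    (hne : c ≠ c') : Disjoint (T.sub c) (T.sub c') := by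
  refine Set.disjoint_left.mpr fun w hw hw' => ?_
  rcases T.anc_total hw hw' with h | h
  · exact hne (hc.eq_of_anc T hc' h)
  · exact hne (hc'.eq_of_anc T hc h).symm

lemma IsChild.sub_subset {c u : V} (hc : T.IsChild c u) : T.sub c ⊆ T.sub u \ {u} := by
  intro w hw
  refine ⟨T.anc_trans (hc.anc T) hw, fun hwu => hc.2 ?_⟩
  rw [Set.mem_singleton_iff] at hwu
  subst hwu
  exact T.anc_antisymm hw (hc.anc T)

lemma sub_subset_Vx {x a : V} (hxa : T.Anc x a) (hax : a ≠ x) : T.sub a ⊆ T.Vx x :=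
  fun _ hw => ⟨T.anc_trans hxa hw, fun hwx => hax (T.anc_antisymm (hwx ▸ hw) hxa)⟩

lemma ncard_anc_le [Finite V] {v : V} {D : ℕ} (hd : ∃ n ≤ D, T.parent^[n] v = T.root) :
    {w | T.Anc w v}.ncard ≤ D + 1 := by
  classical
  obtain ⟨m, hmD, hm⟩ := hd
  -- past depth `m` the iterates stay at the root, so `min n m` steps suffice
  have hsub : {w | T.Anc w v} ⊆ ((Finset.range (D + 1)).image (T.parent^[·] v) : Set V) := by
    rintro _ ⟨n, rfl⟩
    refine Finset.mem_image.mpr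
      ⟨min n m, Finset.mem_range.mpr ((min_le_right n m).trans_lt (by omega)), ?_⟩
    rcases le_total n m with h | h
    · rw [min_eq_left h]
    · rw [min_eq_right h, hm, ← Nat.sub_add_cancel h, Function.iterate_add_apply, hm,
        iterate_parent_root]
  calc {w | T.Anc w v}.ncard ≤ _ := Set.ncard_le_ncard hsub
    _ ≤ D + 1 := by
      rw [Set.ncard_coe_finset]
      exact Finset.card_image_le.trans (Finset.card_range _).le

end RSTree

namespace ReachableWithin

variable {V : Type*} {G : SimpleGraph V} {S : Set V} {u v w : V}

lemma refl (hv : v ∈ S) : ReachableWithin G S v v :=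
  ⟨SimpleGraph.Walk.nil, by simpa using hv⟩

lemma symm (h : ReachableWithin G S v w) : ReachableWithin G S w v := by
  obtain ⟨p, hp⟩ := h
  exact ⟨p.reverse, by simpa using hp⟩

lemma trans (huv : ReachableWithin G S u v) (hvw : ReachableWithin G S v w) :
    ReachableWithin G S u w := by
  obtain ⟨p, hp⟩ := huv
  obtain ⟨q, hq⟩ := hvw
  refine ⟨p.append q, fun z hz => ?_⟩
  rcases (SimpleGraph.Walk.mem_support_append_iff _ _).mp hz with h | h
  exacts [hp z h, hq z h]

lemma mem_right (h : ReachableWithin G S v w) : w ∈ S := by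
  obtain ⟨p, hp⟩ := h
  exact hp w p.end_mem_support

lemma compOfVert_eq (h : ReachableWithin G S v w) : CompOfVert G S v = CompOfVert G S w :=
  Set.ext fun _ => ⟨h.symm.trans, h.trans⟩

end ReachableWithin

lemma IsCompOf.subset {V : Type*} {G : SimpleGraph V} {S C : Set V} (hC : IsCompOf G S C) :
    C ⊆ S := by
  obtain ⟨_, _, rfl⟩ := hC
  exact fun _ hw => ReachableWithin.mem_right hw

lemma IsCompOf.eq_compOfVert {V : Type*} {G : SimpleGraph V} {S C : Set V} {v : V}
    (hC : IsCompOf G S C) (hv : v ∈ C) : C = CompOfVert G S v := by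
  obtain ⟨_, _, rfl⟩ := hC
  exact ReachableWithin.compOfVert_eq hv

namespace RSTree

variable {V : Type*} {G : SimpleGraph V} (T : RSTree G)

lemma reachableWithin_of_anc {S : Set V} {a b : V} (hab : T.Anc a b) (hS : T.sub a ⊆ S) :
    ReachableWithin G S a b := by
  obtain ⟨n, hn⟩ := hab
  induction n generalizing b with
  | zero =>
    obtain rfl : b = a := hn
    exact ReachableWithin.refl (hS (T.anc_refl b))
  | succ n ih =>
    have hb : b ∈ S := hS ⟨n + 1, hn⟩
    rw [Function.iterate_succ_apply] at hn
    by_cases hbr : b = T.root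
    · subst hbr
      exact T.parent_root ▸ ih hn
    · obtain ⟨p, hp⟩ := ih hn
      refine ⟨p.concat (T.adj b hbr), fun z hz => ?_⟩
      rw [SimpleGraph.Walk.support_concat, List.mem_append, List.mem_singleton] at hz
      rcases hz with hz | rfl
      exacts [hp z hz, hb]

lemma compOfVert_Vx_eq_of_anc {x a b : V} (hxa : T.Anc x a) (hax : a ≠ x)
    (hab : T.Anc a b) : CompOfVert G (T.Vx x) a = CompOfVert G (T.Vx x) b :=
  (T.reachableWithin_of_anc hab (T.sub_subset_Vx hxa hax)).compOfVert_eq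

end RSTree

section LightAncestors

variable {V : Type*} {G : SimpleGraph V} (T : RSTree G) {hch : V → V}

lemma not_lightAnc_self (u : V) : ¬ LightAnc T hch u u := by
  rintro ⟨c, hcp, hcne, hcu, -⟩
  exact hcne (T.anc_antisymm hcu (hcp ▸ T.anc_parent c))

lemma not_lightAnc_root (w : V) : ¬ LightAnc T hch w T.root := by
  rintro ⟨c, hcp, hcne, hcr, -⟩
  obtain rfl := T.eq_root_of_anc_root hcr
  exact hcne (hcp ▸ T.parent_root).symm

lemma lightAnc_of_anc {y a u : V} (hya : T.Anc y a) (hne : y ≠ a) (hau : T.Anc a u)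
    (hheavy : ¬ T.Anc (hch y) u) : LightAnc T hch y a := by
  obtain ⟨c, hc, hca⟩ := T.exists_child_anc_of_anc hya hne
  exact ⟨c, hc.1, hc.2, hca, fun h => hheavy (h ▸ T.anc_trans hca hau)⟩

lemma eq_or_lightAnc_of_anc {y u : V} (hyu : T.Anc y u) (hheavy : ¬ T.Anc (hch y) u) :
    y = u ∨ LightAnc T hch y u :=
  or_iff_not_imp_left.mpr fun hne => lightAnc_of_anc T hyu hne (T.anc_refl u) hheavy

lemma setOf_lightAnc_eq {v : V} (hv : v ≠ T.root) :
    {w | LightAnc T hch w v} = {w | LightAnc T hch w (T.parent v)} ∪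
      {w | w = T.parent v ∧ v ≠ hch w} := by
  ext w
  constructor
  · rintro ⟨c, hcp, hcne, hcv, hch'⟩
    by_cases hcv' : c = v
    · subst hcv'
      exact Or.inr ⟨hcp.symm, hch'⟩
    · exact Or.inl ⟨c, hcp, hcne, T.anc_parent_of_anc_of_ne hcv hcv', hch'⟩
  · rintro (⟨c, hcp, hcne, hcv, hch'⟩ | ⟨rfl, hlight⟩)
    · exact ⟨c, hcp, hcne, T.anc_trans hcv (T.anc_parent v), hch'⟩
    · exact ⟨v, rfl, (T.parent_ne_self hv).symm, T.anc_refl v, hlight⟩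

variable [Finite V]

lemma ncard_sub_light_child_lt (hhch : HchValid T hch) {c u : V} (hc : T.IsChild c u)
    (hlight : c ≠ hch u) : 2 * (T.sub c).ncard < (T.sub u).ncard := by
  obtain ⟨hh, hmax⟩ := hhch u ⟨c, hc⟩
  have hdisj : (T.sub c).ncard + (T.sub (hch u)).ncard ≤ (T.sub u \ {u}).ncard := by
    rw [← Set.ncard_union_eq (hc.disjoint_sub T hh hlight)]
    exact Set.ncard_le_ncard (Set.union_subset (hc.sub_subset T) (hh.sub_subset T))
  have hu := Set.ncard_sdiff_singleton_add_one (s := T.sub u) (T.anc_refl u)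
  have := hmax c hc
  omega

lemma two_pow_ncard_lightAnc_mul_le (hhch : HchValid T hch) (v : V) :
    2 ^ {w | LightAnc T hch w v}.ncard * (T.sub v).ncard ≤ Nat.card V := by
  obtain ⟨n, hn⟩ := T.reaches v
  induction n generalizing v with
  | zero =>
    subst hn
    have hempty : {w | LightAnc T hch w T.root} = ∅ :=
      Set.eq_empty_of_forall_notMem (not_lightAnc_root T)
    rw [hempty, Set.ncard_empty, pow_zero, one_mul]
    exact Set.ncard_le_card _
  | succ n ih =>
    rw [Function.iterate_succ_apply] at hn
    by_cases hv : v = T.root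
    · subst hv
      exact T.parent_root ▸ ih _ hn
    have hp := ih _ hn
    have hc : T.IsChild v (T.parent v) := ⟨rfl, (T.parent_ne_self hv).symm⟩
    have hsub := Set.ncard_le_ncard (hc.sub_subset T |>.trans Set.sdiff_subset)
    rw [setOf_lightAnc_eq T hv] at ⊢
    by_cases hheavy : v = hch (T.parent v)
    · have : {w | w = T.parent v ∧ v ≠ hch w} = ∅ :=
        Set.eq_empty_of_forall_notMem fun w ⟨hw, hne⟩ => hne (hw ▸ hheavy)
      rw [this, Set.union_empty]
      exact (Nat.mul_le_mul_left _ hsub).trans hp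
    · have : {w | w = T.parent v ∧ v ≠ hch w} = {T.parent v} := by
        ext w
        exact ⟨fun h => h.1, fun h => ⟨h, h ▸ hheavy⟩⟩
      rw [this, Set.union_singleton, Set.ncard_insert_of_notMem
        (show T.parent v ∉ {w | LightAnc T hch w (T.parent v)} from not_lightAnc_self T _),
        pow_succ, mul_assoc]
      exact (Nat.mul_le_mul_left _ (ncard_sub_light_child_lt T hhch hc hheavy).le).trans hp

lemma ncard_lightAnc_le_log (hhch : HchValid T hch) (v : V) :
    {w | LightAnc T hch w v}.ncard ≤ Nat.log 2 (Nat.card V) := by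
  have hpos : 0 < (T.sub v).ncard := (Set.ncard_pos).mpr ⟨v, T.anc_refl v⟩
  exact Nat.le_log_of_pow_le one_lt_two
    ((Nat.le_mul_of_pos_right _ hpos).trans (two_pow_ncard_lightAnc_mul_le T hhch v))

end LightAncestors

lemma Set.ncard_le_ncard_mul_of_fibers {α β : Type*} [Finite α] [Finite β]
    {S : Set (α × β)} {A : Set α} {B : α → Set β} {m : ℕ}
    (hS : ∀ p ∈ S, p.1 ∈ A ∧ p.2 ∈ B p.1) (hB : ∀ x ∈ A, (B x).ncard ≤ m) :
    S.ncard ≤ A.ncard * m := by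
  classical
  set A' := A.toFinite.toFinset
  calc S.ncard ≤ (⋃ x ∈ A', Prod.mk x '' B x).ncard :=
        Set.ncard_le_ncard fun p hp => Set.mem_biUnion (A.toFinite.mem_toFinset.mpr (hS p hp).1)
          ⟨p.2, (hS p hp).2, rfl⟩
    _ ≤ ∑ x ∈ A', (Prod.mk x '' B x).ncard := A'.set_ncard_biUnion_le _
    _ ≤ ∑ _x ∈ A', m := Finset.sum_le_sum fun x hx =>
        (Set.ncard_image_le (Set.toFinite _)).trans (hB x (A.toFinite.mem_toFinset.mp hx))
    _ = A.ncard * m := by rw [Finset.sum_const, smul_eq_mul, Set.ncard_eq_toFinset_card]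

lemma Set.ncard_le_ncard_mul_of_fibers_swap {α β : Type*} [Finite α] [Finite β]
    {S : Set (β × α)} {A : Set α} {B : α → Set β} {m : ℕ}
    (hS : ∀ p ∈ S, p.2 ∈ A ∧ p.1 ∈ B p.2) (hB : ∀ x ∈ A, (B x).ncard ≤ m) :
    S.ncard ≤ A.ncard * m := by
  rw [← Set.ncard_image_of_injective S Prod.swap_injective]
  exact Set.ncard_le_ncard_mul_of_fibers (by rintro _ ⟨p, hp, rfl⟩; exact hS p hp) hB

section Channels

variable {V : Type*} {G : SimpleGraph V} (T : RSTree G) {hch : V → V}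
  {uc vc : V → Set V → V}

lemma ncard_compPath_le [Finite V] {D : ℕ}
    (hdepth : ∀ v : V, ∃ n ≤ D, T.parent^[n] v = T.root)
    (uc' vc' : Set V → V) (C : Set V) : (CompPath T uc' vc' C).ncard ≤ D + 2 :=
  (Set.ncard_union_le _ _).trans
    (Nat.add_le_add (T.ncard_anc_le (hdepth _)) (Set.ncard_singleton _).le : _ ≤ D + 1 + 1)

lemma ncard_channel_le [Finite V] (Cw : V → V → Set V) {D : ℕ}
    (hdepth : ∀ v : V, ∃ n ≤ D, T.parent^[n] v = T.root) (x y : V) :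
    (Channel T uc vc Cw x y).ncard ≤ 2 * D + 2 :=
  calc (Channel T uc vc Cw x y).ncard
      ≤ {w | T.Anc w (vc x (Cw x y))}.ncard + {w | T.Anc w (uc x (Cw x y))}.ncard :=
        (Set.ncard_union_le _ _).trans (Nat.add_le_add
          (Set.ncard_le_ncard fun _ hw => hw.2) (Set.ncard_le_ncard fun _ hw => hw.2))
    _ ≤ (D + 1) + (D + 1) :=
        Nat.add_le_add (T.ncard_anc_le (hdepth _)) (T.ncard_anc_le (hdepth _))
    _ = 2 * D + 2 := by ring

lemma FullySens.mem_compPath_of_anc {ucx vcx ucy vcy : Set V → V} {x y a c : V}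
    {C : Set V} (hFS : FullySens T ucx vcx ucy vcy x y C) (hc : T.IsChild c y)
    (hca : T.Anc c a) (hau : T.Anc a (ucx C)) :
    x ∈ CompPath T ucy vcy (CompOfVert G (T.Vx y) a) := by
  by_contra hx
  rw [← T.compOfVert_Vx_eq_of_anc (hc.anc T) hc.2 hca] at hx
  exact hFS.2 ⟨c, hc, T.anc_trans hca hau, hx⟩

lemma OrderedLightPair.eq_or_lightAnc_of_mem_channel_left (hgood : GoodChoice G T uc vc)
    {x y a : V} {C : Set V} (holp : OrderedLightPair T hch uc vc x y)
    (hC : IsCompOf G (T.Vx x) C) (hFS : FullySens T (uc x) (vc x) (uc y) (vc y) x y C)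
    (hheavy : ¬ T.Anc (hch y) (uc x C)) (hxa : T.Anc x a) (hav : T.Anc a (vc x C))
    (hax : a ≠ x) :
    y = uc x (CompOfVert G (T.Vx x) a) ∨ LightAnc T hch y (uc x (CompOfVert G (T.Vx x) a)) := by
  obtain ⟨hx, -, hxy, -, -, -, hconn, -⟩ := holp
  have hvC : vc x C ∈ C := (hgood x hx hconn C hC).2.1
  have hCa : C = CompOfVert G (T.Vx x) a :=
    (hC.eq_compOfVert hvC).trans (T.compOfVert_Vx_eq_of_anc hxa hax hav).symm
  -- `y` cannot be `v_C`, which lies below `x`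
  have hyu : T.Anc y (uc x C) := hFS.1.resolve_right fun hy =>
    hxy (hC.subset (Set.mem_singleton_iff.mp hy ▸ hvC)).1
  rw [← hCa]
  exact eq_or_lightAnc_of_anc T hyu hheavy

lemma lightAnc_and_mem_compPath_of_mem_channel_right {x y a : V} {C : Set V}
    (hFS : FullySens T (uc x) (vc x) (uc y) (vc y) x y C)
    (hheavy : ¬ T.Anc (hch y) (uc x C)) (hya : T.Anc y a) (hau : T.Anc a (uc x C))
    (hay : a ≠ y) :
    LightAnc T hch y a ∧ x ∈ CompPath T (uc y) (vc y) (CompOfVert G (T.Vx y) a) := by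
  obtain ⟨c, hc, hca⟩ := T.exists_child_anc_of_anc hya hay.symm
  exact ⟨lightAnc_of_anc T hya hay.symm hau hheavy, hFS.mem_compPath_of_anc T hc hca hau⟩

lemma ncard_channel_pairs_le [Finite V] (hhch : HchValid T hch)
    (hgood : GoodChoice G T uc vc) {D : ℕ}
    (hdepth : ∀ v : V, ∃ n ≤ D, T.parent^[n] v = T.root) {Cw : V → V → Set V}
    (hCw : ∀ x y : V, OrderedLightPair T hch uc vc x y →
      IsCompOf G (T.Vx x) (Cw x y) ∧
      FullySens T (uc x) (vc x) (uc y) (vc y) x y (Cw x y) ∧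
      ¬ T.Anc (hch y) (uc x (Cw x y))) (a : V) :
    {p : V × V | OrderedLightPair T hch uc vc p.1 p.2 ∧
        a ∈ Channel T uc vc Cw p.1 p.2 ∧ a ≠ p.1 ∧ a ≠ p.2}.ncard
      ≤ (D + 1) * (Nat.log 2 (Nat.card V) + 1) + Nat.log 2 (Nat.card V) * (D + 2) := by
  set K := Nat.log 2 (Nat.card V)
  let u : V → V := fun x => uc x (CompOfVert G (T.Vx x) a)
  let left : Set (V × V) :=
    {p | p.1 ∈ {w | T.Anc w a ∧ w ≠ a} ∧
      p.2 ∈ insert (u p.1) {w | LightAnc T hch w (u p.1)}}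
  let right : Set (V × V) :=
    {p | p.2 ∈ {w | LightAnc T hch w a} ∧
      p.1 ∈ CompPath T (uc p.2) (vc p.2) (CompOfVert G (T.Vx p.2) a)}
  have hsub : {p : V × V | OrderedLightPair T hch uc vc p.1 p.2 ∧
      a ∈ Channel T uc vc Cw p.1 p.2 ∧ a ≠ p.1 ∧ a ≠ p.2} ⊆ left ∪ right := by
    rintro ⟨x, y⟩ ⟨holp, hach, hax, hay⟩
    obtain ⟨hC, hFS, hheavy⟩ := hCw x y holp
    rcases hach with ⟨hxa, hav⟩ | ⟨hya, hau⟩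
    · exact Or.inl ⟨⟨hxa, Ne.symm hax⟩,
        holp.eq_or_lightAnc_of_mem_channel_left T hgood hC hFS hheavy hxa hav hax⟩
    · exact Or.inr (lightAnc_and_mem_compPath_of_mem_channel_right T hFS hheavy hya hau hay)
  have hleft : left.ncard ≤ (D + 1) * (K + 1) :=
    calc left.ncard ≤ {w | T.Anc w a ∧ w ≠ a}.ncard * (K + 1) :=
          Set.ncard_le_ncard_mul_of_fibers
            (B := fun x => insert (u x) {w | LightAnc T hch w (u x)}) (fun _ hp => hp)
            fun x _ => (Set.ncard_insert_le _ _).trans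
              (Nat.add_le_add_right (ncard_lightAnc_le_log T hhch _) 1)
      _ ≤ (D + 1) * (K + 1) := Nat.mul_le_mul_right _
          ((Set.ncard_le_ncard fun _ hw => hw.1).trans (T.ncard_anc_le (hdepth a)))
  have hright : right.ncard ≤ K * (D + 2) :=
    calc right.ncard ≤ {w | LightAnc T hch w a}.ncard * (D + 2) :=
          Set.ncard_le_ncard_mul_of_fibers_swap
            (B := fun y => CompPath T (uc y) (vc y) (CompOfVert G (T.Vx y) a)) (fun _ hp => hp)
            fun _ _ => ncard_compPath_le T hdepth _ _ _
      _ ≤ K * (D + 2) := Nat.mul_le_mul_right _ (ncard_lightAnc_le_log T hhch a)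
  calc _ ≤ (left ∪ right).ncard := Set.ncard_le_ncard hsub
    _ ≤ left.ncard + right.ncard := Set.ncard_union_le _ _
    _ ≤ _ := Nat.add_le_add hleft hright

end Channels

theorem stmt16_general {V : Type*} [Fintype V] (G : SimpleGraph V)
    (T : RSTree G) (hch : V → V) (hhch : HchValid T hch)
    (uc vc : V → Set V → V) (hgood : GoodChoice G T uc vc)
    (D : ℕ) (hdepth : ∀ v : V, ∃ n ≤ D, T.parent^[n] v = T.root)
    (Cw : V → V → Set V)
    (hCw : ∀ x y : V, OrderedLightPair T hch uc vc x y →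
      IsCompOf G (T.Vx x) (Cw x y) ∧
      FullySens T (uc x) (vc x) (uc y) (vc y) x y (Cw x y) ∧
      ¬ T.Anc (hch y) (uc x (Cw x y))) :
    (∀ x y : V, OrderedLightPair T hch uc vc x y →
      (Channel T uc vc Cw x y).ncard ≤ 2 * D + 2) ∧
    (∀ a : V, ({p : V × V | OrderedLightPair T hch uc vc p.1 p.2 ∧
        a ∈ Channel T uc vc Cw p.1 p.2 ∧ a ≠ p.1 ∧ a ≠ p.2}.ncard : ℝ)
      ≤ (D + 1) * (Real.logb 2 (Fintype.card V) + 1)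
        + Real.logb 2 (Fintype.card V) * (D + 2)) := by
  refine ⟨fun x y _ => ncard_channel_le T Cw hdepth x y, fun a => ?_⟩
  have hcount := ncard_channel_pairs_le T hhch hgood hdepth hCw a
  rw [Nat.card_eq_fintype_card] at hcount
  have hlog : (Nat.log 2 (Fintype.card V) : ℝ) ≤ Real.logb 2 (Fintype.card V) :=
    Real.natLog_le_logb _ _
  calc _ ≤ (((D + 1) * (Nat.log 2 (Fintype.card V) + 1)
          + Nat.log 2 (Fintype.card V) * (D + 2) : ℕ) : ℝ) := by exact_mod_cast hcount
    _ ≤ _ := by push_cast; gcongr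

/-- Suppose the rooted tree `T` has depth at most `D`, and for each
ordered light pair `⟨x,y⟩` fix a witness component `C^{⟨x,y⟩} = Cw x y ∈ FS(x,y)` with
the tree edge `(y,y_h)` not on `π_x(s,C)`, defining the channel `Π_{⟨x,y⟩}`. Then
(i) each channel has at most `2D+1` edges, i.e. at most `2D+2` vertices, and
(ii) every vertex of `G` is an internal vertex (a vertex other than the endpoints
`x`, `y`) of at most `(D+1)·(log₂ n + 1) + log₂ n · (D+2)` of the channels. -/
theorem stmt16 {V : Type*} [Fintype V] (G : SimpleGraph V) (hG : G.Connected)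
    (T : RSTree G) (hch : V → V) (hhch : HchValid T hch)
    (uc vc : V → Set V → V) (hgood : GoodChoice G T uc vc)
    (D : ℕ) (hdepth : ∀ v : V, ∃ n ≤ D, T.parent^[n] v = T.root)
    (Cw : V → V → Set V)
    (hCw : ∀ x y : V, OrderedLightPair T hch uc vc x y →
      IsCompOf G (T.Vx x) (Cw x y) ∧
      FullySens T (uc x) (vc x) (uc y) (vc y) x y (Cw x y) ∧
      ¬ T.Anc (hch y) (uc x (Cw x y))) :
    (∀ x y : V, OrderedLightPair T hch uc vc x y →
      (Channel T uc vc Cw x y).ncard ≤ 2 * D + 2) ∧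
    (∀ a : V, ({p : V × V | OrderedLightPair T hch uc vc p.1 p.2 ∧
        a ∈ Channel T uc vc Cw p.1 p.2 ∧ a ≠ p.1 ∧ a ≠ p.2}.ncard : ℝ)
      ≤ (D + 1) * (Real.logb 2 (Fintype.card V) + 1)
        + Real.logb 2 (Fintype.card V) * (D + 2)) :=
  stmt16_general G T hch hhch uc vc hgood D hdepth Cw hCw
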